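/- For real numbers α, β, γ, λ, μ, ν with β ≠ 0, the determinant of the 4×4 Sylvester-type matrix 𝒮 = [[α²+β², 0, −αλ, 0],[2αγ, α²+β², βμ−λγ−αν, −αλ],[γ²−β², 2αγ, −γν, βμ−λγ−αν],[0, γ²−β², 0, −γν]] is divisible by β²; precisely det 𝒮 = β²·g where g = γ⁴λ² − β⁴μ² − α⁴ν² + 2μλγβ(β²−γ²) + 2μναβ(α²+β²) + 2λνγα(α²−γ²) + (−λ²+μ²+ν²)(−α²β² + γ²α² + γ²β²). -/

import Mathlib

open Matrix

theorem Matrix.det_fin_four_of {R : Type*} [CommRing R] (a b c d e f g h i j k l m n o p : R) :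
    det !![a, b, c, d; e, f, g, h; i, j, k, l; m, n, o, p] =
      a * det !![f, g, h; j, k, l; n, o, p] - b * det !![e, g, h; i, k, l; m, o, p]
        + c * det !![e, f, h; i, j, l; m, n, p] - d * det !![e, f, g; i, j, k; m, n, o] := by
  simp [det_succ_row_zero, Fin.sum_univ_succ, Fin.succAbove]
  ring

theorem sylvester_det_eq_sq_mul {R : Type*} [CommRing R] (α β γ lam μ ν : R) :
    det !![α ^ 2 + β ^ 2, 0, -(α * lam), 0;
           2 * α * γ, α ^ 2 + β ^ 2, β * μ - lam * γ - α * ν, -(α * lam);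
           γ ^ 2 - β ^ 2, 2 * α * γ, -(γ * ν), β * μ - lam * γ - α * ν;
           0, γ ^ 2 - β ^ 2, 0, -(γ * ν)] =
      β ^ 2 *
        (γ ^ 4 * lam ^ 2 - β ^ 4 * μ ^ 2 - α ^ 4 * ν ^ 2
          + 2 * μ * lam * γ * β * (β ^ 2 - γ ^ 2)
          + 2 * μ * ν * α * β * (α ^ 2 + β ^ 2)
          + 2 * lam * ν * γ * α * (α ^ 2 - γ ^ 2)
          + (-lam ^ 2 + μ ^ 2 + ν ^ 2) * (-(α ^ 2 * β ^ 2) + γ ^ 2 * α ^ 2 + γ ^ 2 * β ^ 2)) := by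
  rw [det_fin_four_of]
  simp only [det_fin_three, of_apply, cons_val, cons_val_zero, cons_val_one]
  ring

theorem sylvester_det_factor_beta_sq_general (α β γ lam μ ν : ℝ) :
    Matrix.det !![α ^ 2 + β ^ 2, 0, -(α * lam), 0;
                  2 * α * γ, α ^ 2 + β ^ 2, β * μ - lam * γ - α * ν, -(α * lam);
                  γ ^ 2 - β ^ 2, 2 * α * γ, -(γ * ν), β * μ - lam * γ - α * ν;
                  0, γ ^ 2 - β ^ 2, 0, -(γ * ν)] =
      β ^ 2 *
        (γ ^ 4 * lam ^ 2 - β ^ 4 * μ ^ 2 - α ^ 4 * ν ^ 2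
          + 2 * μ * lam * γ * β * (β ^ 2 - γ ^ 2)
          + 2 * μ * ν * α * β * (α ^ 2 + β ^ 2)
          + 2 * lam * ν * γ * α * (α ^ 2 - γ ^ 2)
          + (-lam ^ 2 + μ ^ 2 + ν ^ 2) * (-(α ^ 2 * β ^ 2) + γ ^ 2 * α ^ 2 + γ ^ 2 * β ^ 2)) :=
  sylvester_det_eq_sq_mul α β γ lam μ ν

theorem sylvester_det_factor_beta_sq (α β γ lam μ ν : ℝ) (hβ : β ≠ 0) :
    Matrix.det !![α ^ 2 + β ^ 2, 0, -(α * lam), 0;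
                  2 * α * γ, α ^ 2 + β ^ 2, β * μ - lam * γ - α * ν, -(α * lam);
                  γ ^ 2 - β ^ 2, 2 * α * γ, -(γ * ν), β * μ - lam * γ - α * ν;
                  0, γ ^ 2 - β ^ 2, 0, -(γ * ν)] =
      β ^ 2 *
        (γ ^ 4 * lam ^ 2 - β ^ 4 * μ ^ 2 - α ^ 4 * ν ^ 2
          + 2 * μ * lam * γ * β * (β ^ 2 - γ ^ 2)
          + 2 * μ * ν * α * β * (α ^ 2 + β ^ 2)
          + 2 * lam * ν * γ * α * (α ^ 2 - γ ^ 2)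
          + (-lam ^ 2 + μ ^ 2 + ν ^ 2) * (-(α ^ 2 * β ^ 2) + γ ^ 2 * α ^ 2 + γ ^ 2 * β ^ 2)) :=
  sylvester_det_factor_beta_sq_general α β γ lam μ ν
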